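/- Consider the complete product-type regression f(x₁, x₂) = (1, x₁)ᵀ ⊗ (1, x₂)ᵀ = (1, x₂, x₁, x₁x₂)ᵀ on the design region [0,1]² and normal use conditions x_{u1} < 0, x_{u2} < 0. Let w_v* = |x_{uv}|/(1 + 2|x_{uv}|) for v = 1, 2. Then the four-point design ξ* assigning weights (1−w₁*)(1−w₂*), (1−w₁*)w₂*, w₁*(1−w₂*), w₁*w₂* to the points (0,0), (0,1), (1,0), (1,1), respectively, has invertible information matrix with f(x_{u1}, x_{u2})ᵀ M(ξ*)⁻¹ f(x_{u1}, x_{u2}) = (1 + 2|x_{u1}|)²(1 + 2|x_{u2}|)², and every approximate design ξ on [0,1]² with invertible M(ξ) satisfies f(x_{u1}, x_{u2})ᵀ M(ξ)⁻¹ f(x_{u1}, x_{u2}) ≥ (1 + 2|x_{u1}|)²(1 + 2|x_{u2}|)². Hence ξ* is c-optimal for extrapolation at (x_{u1}, x_{u2}). -/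

import Mathlib

/-!
The lower bound is Elfving's argument: if `|f(x)ᵀu| ≤ 1` on the design region, then for every
design Cauchy–Schwarz in the `M(ξ)` inner product gives
`(uᵀc)² = (uᵀM(M⁻¹c))² ≤ (uᵀMu)(cᵀM⁻¹c) ≤ cᵀM⁻¹c`. Here `u = (1,-2) ⊗ (1,-2)`, for which
`f(x)ᵀu = (1 - 2x₁)(1 - 2x₂)`, a product of Chebyshev polynomials of `[0,1]`, and
`uᵀc = (1 + 2|x_{u1}|)(1 + 2|x_{u2}|)`.

The bound is attained because `ξ*` is the product of the two marginal designs on `{0,1}`: its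
information matrix is the Kronecker product of the marginal ones, so the criterion factorises into
two one-dimensional ones, each equal to `(1 + 2|x_{uv}|)²`.
-/

open Matrix

/-- The complete product-type regression function
`f(x₁,x₂) = (1,x₁)ᵀ ⊗ (1,x₂)ᵀ` on `[0,1]²`. -/
noncomputable def fProd (z : ℝ × ℝ) : Fin 2 × Fin 2 → ℝ :=
  fun q => ![1, z.1] q.1 * ![1, z.2] q.2

/-- The information matrix `M(ξ) = Σᵢ wᵢ f(zᵢ) f(zᵢ)ᵀ` of an approximate design on `[0,1]²`
for the complete product-type regression `fProd`. -/
noncomputable def infoM {m : ℕ} (z : Fin m → ℝ × ℝ) (w : Fin m → ℝ) :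
    Matrix (Fin 2 × Fin 2) (Fin 2 × Fin 2) ℝ :=
  ∑ i, w i • vecMulVec (fProd (z i)) (fProd (z i))

open scoped Kronecker

section Elfving

variable {ι n : Type*} [Fintype ι] [Fintype n]

theorem dotProduct_sum_smul_vecMulVec_mulVec {R : Type*} [CommSemiring R] (f : ι → n → R)
    (w : ι → R) (p q : n → R) :
    p ⬝ᵥ (∑ i, w i • vecMulVec (f i) (f i)) *ᵥ q = ∑ i, w i * ((f i ⬝ᵥ p) * (f i ⬝ᵥ q)) := by
  simp only [Matrix.sum_mulVec, smul_mulVec, dotProduct_sum, dotProduct_smul, smul_eq_mul,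
    vecMulVec_mulVec, op_smul_eq_mul]
  simp only [dotProduct_comm p]

theorem sq_dotProduct_le_dotProduct_inv_mulVec [DecidableEq n] (f : ι → n → ℝ) (w : ι → ℝ)
    (hw : ∀ i, 0 ≤ w i) (hw1 : ∑ i, w i = 1) (u c : n → ℝ) (hu : ∀ i, |f i ⬝ᵥ u| ≤ 1)
    (hM : IsUnit (∑ i, w i • vecMulVec (f i) (f i)).det) :
    (u ⬝ᵥ c) ^ 2 ≤ c ⬝ᵥ (∑ i, w i • vecMulVec (f i) (f i))⁻¹ *ᵥ c := by
  set M := ∑ i, w i • vecMulVec (f i) (f i)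
  set y := M⁻¹ *ᵥ c
  have hMy : M *ᵥ y = c := by simp [y, mulVec_mulVec, mul_nonsing_inv M hM]
  have hcy : c ⬝ᵥ y = ∑ i, w i * ((f i ⬝ᵥ y) * (f i ⬝ᵥ y)) := by
    rw [← hMy, dotProduct_comm, dotProduct_sum_smul_vecMulVec_mulVec]
  have huu : ∑ i, w i * ((f i ⬝ᵥ u) * (f i ⬝ᵥ u)) ≤ 1 := by
    rw [← hw1]
    refine Finset.sum_le_sum fun i _ => ?_
    have hsq : (f i ⬝ᵥ u) * (f i ⬝ᵥ u) ≤ 1 := by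
      rw [← abs_mul_abs_self]; exact mul_le_one₀ (hu i) (abs_nonneg _) (hu i)
    exact mul_le_of_le_one_right (hw i) hsq
  calc (u ⬝ᵥ c) ^ 2 = (∑ i, w i * ((f i ⬝ᵥ u) * (f i ⬝ᵥ y))) ^ 2 := by
        rw [← hMy, dotProduct_sum_smul_vecMulVec_mulVec]
    _ ≤ (∑ i, w i * ((f i ⬝ᵥ u) * (f i ⬝ᵥ u))) * ∑ i, w i * ((f i ⬝ᵥ y) * (f i ⬝ᵥ y)) :=
        Finset.sum_sq_le_sum_mul_sum_of_sq_le_mul _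
          (fun i _ => mul_nonneg (hw i) (mul_self_nonneg _))
          (fun i _ => mul_nonneg (hw i) (mul_self_nonneg _)) (fun i _ => le_of_eq (by ring))
    _ ≤ c ⬝ᵥ y := by
        rw [hcy]
        exact mul_le_of_le_one_left
          (Finset.sum_nonneg fun i _ => mul_nonneg (hw i) (mul_self_nonneg _)) huu

end Elfving

theorem kronecker_dotProduct_kronecker_mulVec {R m n : Type*} [CommSemiring R] [Fintype m]
    [Fintype n] (a : m → R) (b : n → R) (A : Matrix m m R) (B : Matrix n n R) :
    ((fun q : m × n => a q.1 * b q.2) ⬝ᵥ (A ⊗ₖ B) *ᵥ (fun q : m × n => a q.1 * b q.2) : R) =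
      (a ⬝ᵥ A *ᵥ a) * (b ⬝ᵥ B *ᵥ b) := by
  simp only [dotProduct, mulVec, Fintype.sum_prod_type, kronecker_apply]
  rw [Finset.sum_mul_sum]
  simp only [Finset.mul_sum, Finset.sum_mul]
  refine Finset.sum_congr rfl fun i _ => Finset.sum_congr rfl fun j _ => ?_
  rw [Finset.sum_comm]
  congr! 2 with k _ l _
  ring

/-- Information matrix of the design on `{0, 1}` with weights `1 - w`, `w` for the line `(1, t)`. -/
def lineInfo (w : ℝ) : Matrix (Fin 2) (Fin 2) ℝ := !![1, w; w, w]

theorem det_lineInfo (w : ℝ) : (lineInfo w).det = w * (1 - w) := by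
  rw [lineInfo, det_fin_two_of]; ring

theorem isUnit_det_lineInfo_optimal {x : ℝ} (hx : x ≠ 0) :
    IsUnit (lineInfo (|x| / (1 + 2 * |x|))).det := by
  have ha : 0 < |x| := abs_pos.mpr hx
  have hw : |x| / (1 + 2 * |x|) < 1 := (div_lt_one (by positivity)).mpr (by linarith)
  rw [det_lineInfo, isUnit_iff_ne_zero]
  exact mul_ne_zero (by positivity) (sub_ne_zero.mpr hw.ne')

theorem dotProduct_lineInfo_inv_mulVec (w x : ℝ) :
    ![1, x] ⬝ᵥ (lineInfo w)⁻¹ *ᵥ ![1, x] = (w - 2 * w * x + x ^ 2) / (w * (1 - w)) := by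
  rw [inv_def, det_lineInfo, Ring.inverse_eq_inv', lineInfo, adjugate_fin_two_of]
  rw [smul_mulVec, dotProduct_smul, smul_eq_mul, div_eq_inv_mul]
  congr 1
  simp only [dotProduct, mulVec, of_apply, cons_val', cons_val_fin_one, Fin.sum_univ_two,
    Fin.isValue, cons_val_zero, cons_val_one]
  ring

theorem dotProduct_lineInfo_optimal_inv_mulVec {x : ℝ} (hx : x < 0) :
    ![1, x] ⬝ᵥ (lineInfo (|x| / (1 + 2 * |x|)))⁻¹ *ᵥ ![1, x] = (1 + 2 * |x|) ^ 2 := by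
  obtain ⟨a, ha, rfl⟩ : ∃ a, 0 < a ∧ x = -a := ⟨-x, neg_pos.mpr hx, (neg_neg x).symm⟩
  have hvar : a / (1 + 2 * a) * (1 - a / (1 + 2 * a)) = a * (1 + a) / (1 + 2 * a) ^ 2 := by
    field_simp; ring
  have hnum : a / (1 + 2 * a) - 2 * (a / (1 + 2 * a)) * -a + (-a) ^ 2 = a * (1 + a) := by
    field_simp; ring
  rw [dotProduct_lineInfo_inv_mulVec, abs_neg, abs_of_pos ha, hvar, hnum]
  field_simp

theorem infoM_productDesign (p q : ℝ) :
    infoM ![(0, 0), (0, 1), (1, 0), (1, 1)] ![(1 - p) * (1 - q), (1 - p) * q, p * (1 - q), p * q] =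
      lineInfo p ⊗ₖ lineInfo q := by
  ext ⟨i, j⟩ ⟨k, l⟩
  fin_cases i <;> fin_cases j <;> fin_cases k <;> fin_cases l <;>
    simp only [infoM, fProd, lineInfo, Matrix.sum_apply, Matrix.smul_apply, vecMulVec_apply,
      Fin.sum_univ_four, kroneckerMap_apply, of_apply, cons_val', cons_val, cons_val_zero,
      cons_val_one, cons_val_fin_one, smul_eq_mul, Fin.isValue, Fin.zero_eta, Fin.mk_one] <;> ring

def elfvingVec : Fin 2 × Fin 2 → ℝ := fun q => ![1, -2] q.1 * ![1, -2] q.2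

theorem fProd_dotProduct_elfvingVec (z : ℝ × ℝ) :
    fProd z ⬝ᵥ elfvingVec = (1 - 2 * z.1) * (1 - 2 * z.2) := by
  simp only [dotProduct, fProd, elfvingVec, Fintype.sum_prod_type, Fin.sum_univ_two, Fin.isValue,
    cons_val_zero, cons_val_one, cons_val_fin_one]
  ring

theorem abs_fProd_dotProduct_elfvingVec_le_one {z : ℝ × ℝ}
    (hz : z ∈ Set.Icc (0 : ℝ) 1 ×ˢ Set.Icc (0 : ℝ) 1) : |fProd z ⬝ᵥ elfvingVec| ≤ 1 := by
  obtain ⟨⟨h1, h1'⟩, h2, h2'⟩ := hz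
  rw [fProd_dotProduct_elfvingVec, abs_mul]
  exact mul_le_one₀ (abs_le.mpr ⟨by linarith, by linarith⟩) (abs_nonneg _)
    (abs_le.mpr ⟨by linarith, by linarith⟩)

/-- For the complete product-type regression on `[0,1]²` with use conditions
`x_{u1} < 0`, `x_{u2} < 0`, the four-point product design with weights
`(1−w₁*)(1−w₂*), (1−w₁*)w₂*, w₁*(1−w₂*), w₁*w₂*` at `(0,0), (0,1), (1,0), (1,1)`, where
`w_v* = |x_{uv}|/(1+2|x_{uv}|)`, has invertible information matrix, attains criterion value
`(1+2|x_{u1}|)²(1+2|x_{u2}|)²`, and is `c`-optimal for extrapolation at `(x_{u1}, x_{u2})`. -/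
theorem stmt13 (xu1 xu2 : ℝ) (hxu1 : xu1 < 0) (hxu2 : xu2 < 0) :
    IsUnit (infoM ![(0, 0), (0, 1), (1, 0), (1, 1)]
      ![(1 - |xu1| / (1 + 2 * |xu1|)) * (1 - |xu2| / (1 + 2 * |xu2|)),
        (1 - |xu1| / (1 + 2 * |xu1|)) * (|xu2| / (1 + 2 * |xu2|)),
        (|xu1| / (1 + 2 * |xu1|)) * (1 - |xu2| / (1 + 2 * |xu2|)),
        (|xu1| / (1 + 2 * |xu1|)) * (|xu2| / (1 + 2 * |xu2|))]).det ∧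
    fProd (xu1, xu2) ⬝ᵥ (infoM ![(0, 0), (0, 1), (1, 0), (1, 1)]
      ![(1 - |xu1| / (1 + 2 * |xu1|)) * (1 - |xu2| / (1 + 2 * |xu2|)),
        (1 - |xu1| / (1 + 2 * |xu1|)) * (|xu2| / (1 + 2 * |xu2|)),
        (|xu1| / (1 + 2 * |xu1|)) * (1 - |xu2| / (1 + 2 * |xu2|)),
        (|xu1| / (1 + 2 * |xu1|)) * (|xu2| / (1 + 2 * |xu2|))])⁻¹ *ᵥ fProd (xu1, xu2) =
      (1 + 2 * |xu1|) ^ 2 * (1 + 2 * |xu2|) ^ 2 ∧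
    ∀ {m : ℕ} (z : Fin m → ℝ × ℝ) (w : Fin m → ℝ),
      (∀ i, z i ∈ Set.Icc (0 : ℝ) 1 ×ˢ Set.Icc (0 : ℝ) 1) → (∀ i, 0 < w i) →
      ∑ i, w i = 1 → IsUnit (infoM z w).det →
      (1 + 2 * |xu1|) ^ 2 * (1 + 2 * |xu2|) ^ 2 ≤
        fProd (xu1, xu2) ⬝ᵥ (infoM z w)⁻¹ *ᵥ fProd (xu1, xu2) := by
  rw [infoM_productDesign]
  refine ⟨?_, ?_, fun z w hz hw hw1 hM => ?_⟩
  · rw [det_kronecker]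
    exact ((isUnit_det_lineInfo_optimal hxu1.ne).pow _).mul
      ((isUnit_det_lineInfo_optimal hxu2.ne).pow _)
  · rw [inv_kronecker]
    exact (kronecker_dotProduct_kronecker_mulVec _ _ _ _).trans (by
      rw [dotProduct_lineInfo_optimal_inv_mulVec hxu1, dotProduct_lineInfo_optimal_inv_mulVec hxu2])
  · calc (1 + 2 * |xu1|) ^ 2 * (1 + 2 * |xu2|) ^ 2 = (elfvingVec ⬝ᵥ fProd (xu1, xu2)) ^ 2 := by
          rw [dotProduct_comm, fProd_dotProduct_elfvingVec, abs_of_neg hxu1, abs_of_neg hxu2]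
          ring
      _ ≤ _ := sq_dotProduct_le_dotProduct_inv_mulVec (fun i => fProd (z i)) w
          (fun i => (hw i).le) hw1 _ _ (fun i => abs_fProd_dotProduct_elfvingVec_le_one (hz i)) hM
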